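/- arXiv:1701.02008 — 4 statements merged into one kernel-verified Lean document; each statement's English description precedes it below -/
import Mathlib

section
/- Let p be an odd prime and let G be a finite group that is p-stable. Then every subgroup H of G is p-stable. -/
/-!
An injective homomorphism `f : H →* G` maps `N_H(Q)` into `N_G(f Q)`, and by injectivity `C_H(Q)`
is exactly the preimage of `C_G(f Q)`, so `N_H(Q)/C_H(Q)` embeds into `N_G(f Q)/C_G(f Q)`. The
preimage of `O_p` under an embedding is a normal `p`-subgroup, hence lies in `O_p`, and the
condition `[[a,x],x] = 1` is transported by `f`.
-/

/-- `O_p(G)`: the largest normal `p`-subgroup of `G`. -/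
def pCore (p : ℕ) (G : Type*) [Group G] : Subgroup G :=
  sSup {N : Subgroup G | N.Normal ∧ IsPGroup p N}

instance relCent_normal {G : Type*} [Group G] (Q : Subgroup G) :
    ((Subgroup.centralizer (Q : Set G)).subgroupOf (Subgroup.normalizer (Q : Set G))).Normal := by
  rw [← Subgroup.normalizerMonoidHom_ker]
  exact MonoidHom.normal_ker _

open scoped commutatorElement

/-- A group `G` is `p`-stable if for every `p`-subgroup `Q` and every `x ∈ N_G(Q)` with
`[[a,x],x] = 1` for all `a ∈ Q`, the image of `x` in `N_G(Q)/C_G(Q)` lies in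
`O_p(N_G(Q)/C_G(Q))`. -/
def IsPStable (p : ℕ) (G : Type*) [Group G] : Prop :=
  ∀ Q : Subgroup G, IsPGroup p Q →
    ∀ x : (Subgroup.normalizer (Q : Set G)), (∀ a ∈ Q, ⁅⁅a, (x : G)⁆, (x : G)⁆ = 1) →
      (QuotientGroup.mk x :
          (Subgroup.normalizer (Q : Set G)) ⧸ (Subgroup.centralizer (Q : Set G)).subgroupOf (Subgroup.normalizer (Q : Set G))) ∈
        pCore p ((Subgroup.normalizer (Q : Set G)) ⧸ (Subgroup.centralizer (Q : Set G)).subgroupOf (Subgroup.normalizer (Q : Set G)))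

section PCore

variable {G : Type*} [Group G]

instance pCore_normal (p : ℕ) : (pCore p G).Normal :=
  Subgroup.sSup_normal _ fun _ hN => hN.1

lemma directedOn_normal_isPGroup (p : ℕ) :
    DirectedOn (· ≤ ·) {N : Subgroup G | N.Normal ∧ IsPGroup p N} := by
  rintro M ⟨_, hMp⟩ N ⟨_, hNp⟩
  exact ⟨M ⊔ N, ⟨Subgroup.sup_normal M N, hMp.to_sup_of_normal_right hNp⟩, le_sup_left,
    le_sup_right⟩

-- Directedness makes `pCore p G` the union of the normal `p`-subgroups.
lemma isPGroup_pCore (p : ℕ) : IsPGroup p (pCore p G) := by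
  rintro ⟨g, hg⟩
  obtain ⟨N, ⟨-, hN⟩, hgN⟩ := (Subgroup.mem_sSup_of_directedOn
    (K := {N : Subgroup G | N.Normal ∧ IsPGroup p N}) ⟨⊥, Subgroup.normal_bot, IsPGroup.of_bot⟩
    (directedOn_normal_isPGroup p)).1 hg
  obtain ⟨k, hk⟩ := hN ⟨g, hgN⟩
  exact ⟨k, Subtype.ext (by simpa using congrArg Subtype.val hk)⟩

lemma comap_pCore_le {K : Type*} [Group K] {p : ℕ} {φ : K →* G} (hφ : Function.Injective φ) :
    (pCore p G).comap φ ≤ pCore p K :=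
  le_sSup ⟨inferInstance, (isPGroup_pCore p).comap_of_injective φ hφ⟩

end PCore

namespace Subgroup

open QuotientGroup

variable {H G : Type*} [Group H] [Group G] (f : H →* G) (Q : Subgroup H)

def normalizerMap : normalizer (Q : Set H) →* normalizer (Q.map f : Set G) :=
  (inclusion (le_normalizer_map f)).comp (f.subgroupMap _)

@[simp]
lemma coe_normalizerMap (y : normalizer (Q : Set H)) : (normalizerMap f Q y : G) = f y :=
  rfl

lemma centralizer_subgroupOf_le_comap_normalizerMap :
    (centralizer (Q : Set H)).subgroupOf (normalizer (Q : Set H)) ≤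
      ((centralizer (Q.map f : Set G)).subgroupOf (normalizer (Q.map f : Set G))).comap
        (normalizerMap f Q) :=
  fun y hy => map_centralizer_le_centralizer_image _ f ⟨y, hy, rfl⟩

lemma map_mem_centralizer_map_iff (hf : Function.Injective f) {y : H} :
    f y ∈ centralizer (Q.map f : Set G) ↔ y ∈ centralizer (Q : Set H) := by
  simp [mem_centralizer_iff, ← map_mul, hf.eq_iff]

def automizerMap :
    normalizer (Q : Set H) ⧸ (centralizer (Q : Set H)).subgroupOf (normalizer (Q : Set H)) →*
      normalizer (Q.map f : Set G) ⧸
        (centralizer (Q.map f : Set G)).subgroupOf (normalizer (Q.map f : Set G)) :=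
  QuotientGroup.map _ _ (normalizerMap f Q) (centralizer_subgroupOf_le_comap_normalizerMap f Q)

lemma automizerMap_injective (hf : Function.Injective f) :
    Function.Injective (automizerMap f Q) := by
  have hker : ((centralizer (Q.map f : Set G)).subgroupOf (normalizer (Q.map f : Set G))).comap
      (normalizerMap f Q) = (centralizer (Q : Set H)).subgroupOf (normalizer (Q : Set H)) := by
    ext y
    exact map_mem_centralizer_map_iff f Q hf
  rw [← MonoidHom.ker_eq_bot_iff, automizerMap, ker_map, hker, map_mk'_self]

end Subgroup

theorem IsPStable.of_injective {p : ℕ} {H G : Type*} [Group H] [Group G] (hG : IsPStable p G)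
    {f : H →* G} (hf : Function.Injective f) : IsPStable p H := by
  intro Q hQ x hx
  have hfx : ∀ a ∈ Q.map f, ⁅⁅a, (Subgroup.normalizerMap f Q x : G)⁆,
      (Subgroup.normalizerMap f Q x : G)⁆ = 1 := by
    rintro _ ⟨a, ha, rfl⟩
    simpa only [Subgroup.coe_normalizerMap, map_commutatorElement, map_one] using
      congrArg f (hx a ha)
  exact comap_pCore_le (Subgroup.automizerMap_injective f Q hf) (hG _ (hQ.map f) _ hfx)

theorem pStable_subgroup_general (p : ℕ)
    (G : Type*) [Group G] (hG : IsPStable p G) (H : Subgroup G) :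
    IsPStable p H :=
  hG.of_injective H.subtype_injective

/-- Every subgroup of a `p`-stable finite group (`p` an odd prime) is `p`-stable. -/
theorem pStable_subgroup (p : ℕ) (hp : p.Prime) (hodd : Odd p)
    (G : Type*) [Group G] [Finite G] (hG : IsPStable p G) (H : Subgroup G) :
    IsPStable p H :=
  pStable_subgroup_general p G hG H
end

section
/- Let p be an odd prime, let F be a finite field with q elements such that p divides q − 1, and let E be a non-abelian group of order p³ and exponent p (i.e. x^p = 1 for all x ∈ E). Then there exists an injective group homomorphism from E into the general linear group GL(p, F). -/
open Matrix


namespace ExtraspecialAux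

section
variable {p : ℕ} [NeZero p]

theorem myPow_mod_eq {M : Type*} [Monoid M] {g : M} (hg : g ^ p = 1) (n : ℕ) :
    g ^ (n % p) = g ^ n := by
  conv_rhs => rw [← Nat.mod_add_div n p]
  rw [pow_add, pow_mul, hg, one_pow, mul_one]

theorem myPow_val_add {M : Type*} [Monoid M] {g : M} (hg : g ^ p = 1) (x y : ZMod p) :
    g ^ (x + y).val = g ^ x.val * g ^ y.val := by
  rw [ZMod.val_add, myPow_mod_eq hg, pow_add]

theorem myPow_val_mul {M : Type*} [Monoid M] {g : M} (hg : g ^ p = 1) (x y : ZMod p) :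
    g ^ (x * y).val = g ^ (x.val * y.val) := by
  rw [ZMod.val_mul, myPow_mod_eq hg]

section Chi
variable {F : Type*} [Field F]

def myChi (ζ : F) (x : ZMod p) : F := ζ ^ x.val

theorem myChi_add {ζ : F} (hζ : ζ ^ p = 1) (x y : ZMod p) :
    myChi ζ (x + y) = myChi ζ x * myChi ζ y := myPow_val_add hζ x y

omit [NeZero p] in
theorem myChi_zero (ζ : F) : myChi (p := p) ζ 0 = 1 := by simp [myChi]

omit [NeZero p] in
theorem myChi_ne_zero {ζ : F} (hζ : ζ ≠ 0) (x : ZMod p) : myChi ζ x ≠ 0 :=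
  pow_ne_zero _ hζ

theorem ne_zero_of_orderOf {ζ : F} (hζ : orderOf ζ = p) : ζ ≠ 0 := by
  rintro rfl
  have h1 : (0 : F) ^ p = 1 := by rw [← hζ]; exact pow_orderOf_eq_one 0
  rw [zero_pow (NeZero.ne p)] at h1
  exact zero_ne_one h1

theorem myChi_inj {ζ : F} (hζ : orderOf ζ = p) {x y : ZMod p} (h : myChi ζ x = myChi ζ y) :
    x = y := by
  have hζp : ζ ^ p = 1 := by rw [← hζ]; exact pow_orderOf_eq_one ζ
  have hζ0 : ζ ≠ 0 := ne_zero_of_orderOf hζ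
  have h1 : myChi ζ (x - y) = 1 := by
    have h2 := myChi_add hζp (x - y) y
    rw [sub_add_cancel, h] at h2
    have := mul_right_cancel₀ (myChi_ne_zero hζ0 y) (h2.symm.trans (one_mul (myChi ζ y)).symm)
    exact this
  have h2 : orderOf ζ ∣ (x - y).val := orderOf_dvd_of_pow_eq_one h1
  rw [hζ] at h2
  have h3 : (x - y).val = 0 := Nat.eq_zero_of_dvd_of_lt h2 (ZMod.val_lt _)
  have h4 : x - y = 0 := (ZMod.val_eq_zero _).mp h3
  linear_combination (norm := abel) h4

/-- The monomial matrix `ζ^k X^i D^j`. -/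
def myM (ζ : F) (i j k : ZMod p) : Matrix (ZMod p) (ZMod p) F :=
  Matrix.of fun r s => if r = s + i then myChi ζ (k + j * s) else 0

theorem myM_mul {ζ : F} (hζ : ζ ^ p = 1) (i j k i' j' k' : ZMod p) :
    myM ζ i j k * myM ζ i' j' k' = myM ζ (i + i') (j + j') (k + k' + j * i') := by
  ext r s
  rw [Matrix.mul_apply]
  rw [Finset.sum_eq_single (s + i')]
  · simp only [myM, Matrix.of_apply, eq_self_iff_true, if_true]
    have hc : (r = s + i' + i) ↔ (r = s + (i + i')) := by constructor <;> (intro h; rw [h]; ring)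
    by_cases hr : r = s + (i + i')
    · rw [if_pos (hc.mpr hr), if_pos hr, ← myChi_add hζ]
      congr 1
      ring
    · rw [if_neg (fun h => hr (hc.mp h)), if_neg hr, zero_mul]
  · intro t _ ht
    simp only [myM, Matrix.of_apply, if_neg ht, mul_zero]
  · intro h
    exact absurd (Finset.mem_univ _) h

theorem myM_one (ζ : F) : myM (p := p) ζ 0 0 0 = 1 := by
  ext r s
  simp only [myM, Matrix.of_apply, add_zero, zero_mul, myChi_zero, Matrix.one_apply]

theorem myM_inj {ζ : F} (hζ : orderOf ζ = p) {i j k i' j' k' : ZMod p}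
    (h : myM ζ i j k = myM ζ i' j' k') : i = i' ∧ j = j' ∧ k = k' := by
  have hζ0 : ζ ≠ 0 := ne_zero_of_orderOf hζ
  have entry : ∀ r s : ZMod p, myM ζ i j k r s = myM ζ i' j' k' r s := fun r s => by rw [h]
  have hii : i = i' := by
    have h0 := entry (0 + i) 0
    simp only [myM, Matrix.of_apply, eq_self_iff_true, if_true] at h0
    by_contra hne
    have hcond : ¬ ((0:ZMod p) + i = 0 + i') := by simpa using hne
    rw [if_neg hcond] at h0
    exact myChi_ne_zero hζ0 _ h0
  subst hii
  have hkk : k = k' := by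
    have h0 := entry (0 + i) 0
    simp only [myM, Matrix.of_apply, eq_self_iff_true, if_true] at h0
    have h1 := myChi_inj hζ h0
    linear_combination h1
  subst hkk
  have hjj : j = j' := by
    have h0 := entry (1 + i) 1
    simp only [myM, Matrix.of_apply, eq_self_iff_true, if_true] at h0
    have h1 := myChi_inj hζ h0
    linear_combination h1
  exact ⟨rfl, hjj, rfl⟩

/-- The unit version. -/
def myU (ζ : F) (hζ : ζ ^ p = 1) (t : ZMod p × ZMod p × ZMod p) :
    (Matrix (ZMod p) (ZMod p) F)ˣ where
  val := myM ζ t.1 t.2.1 t.2.2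
  inv := myM ζ (-t.1) (-t.2.1) (t.2.1 * t.1 - t.2.2)
  val_inv := by
    rw [myM_mul hζ]
    have e1 : t.1 + -t.1 = 0 := by ring
    have e2 : t.2.1 + -t.2.1 = 0 := by ring
    have e3 : t.2.2 + (t.2.1 * t.1 - t.2.2) + t.2.1 * -t.1 = 0 := by ring
    rw [e1, e2, e3, myM_one]
  inv_val := by
    rw [myM_mul hζ]
    have e1 : -t.1 + t.1 = 0 := by ring
    have e2 : -t.2.1 + t.2.1 = 0 := by ring
    have e3 : t.2.1 * t.1 - t.2.2 + t.2.2 + -t.2.1 * t.1 = 0 := by ring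
    rw [e1, e2, e3, myM_one]

end Chi

end

theorem exists_normal_form (p : ℕ) (hp : p.Prime) (E : Type*) [Group E] [Finite E]
    (hcard : Nat.card E = p ^ 3) (hnonab : ¬∀ a b : E, a * b = b * a)
    (hexp : ∀ x : E, x ^ p = 1) :
    ∃ ψ : ZMod p × ZMod p × ZMod p → E, Function.Bijective ψ ∧
      ∀ t t' : ZMod p × ZMod p × ZMod p,
        ψ t * ψ t' = ψ (t.1 + t'.1, t.2.1 + t'.2.1, t.2.2 + t'.2.2 + t.2.1 * t'.1) := by
  have hfact : Fact p.Prime := ⟨hp⟩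
  have hnz : NeZero p := ⟨hp.pos.ne'⟩
  have hfact1 : Fact (1 < p) := ⟨hp.one_lt⟩
  push_neg at hnonab
  obtain ⟨a, b, hab⟩ := hnonab
  set c : E := b⁻¹ * a⁻¹ * b * a with hc
  have hba : b * a = a * b * c := by rw [hc]; group
  -- c is central
  have hcenter : c ∈ Subgroup.center E := by
    obtain ⟨k, hk3, hkc⟩ := (Nat.dvd_prime_pow hp).mp
      (hcard ▸ Subgroup.card_subgroup_dvd_card (Subgroup.center E))
    have hpg : IsPGroup p E := IsPGroup.of_card hcard
    set Q := E ⧸ Subgroup.center E with hQ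
    have hcardQ : Nat.card Q * p ^ k = p ^ 3 := by
      rw [← hkc, ← Subgroup.card_eq_card_quotient_mul_card_subgroup, hcard]
    have hk1 : 1 ≤ k := by
      by_contra hk0
      have hk0' : k = 0 := by omega
      subst hk0'
      have hnt : Nontrivial E := ⟨⟨a * b, b * a, hab⟩⟩
      have : Nontrivial (Subgroup.center E) := IsPGroup.center_nontrivial hpg
      have h1 : 1 < Nat.card (Subgroup.center E) := Finite.one_lt_card
      rw [hkc, pow_zero] at h1
      omega
    have hk2 : k < 2 := by
      by_contra hge
      push_neg at hge
      have hdvd : Nat.card Q ∣ p := by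
        have h2 : (Nat.card Q * p ^ (k - 2)) * p ^ 2 = p * p ^ 2 := by
          rw [mul_assoc, ← pow_add]
          have : k - 2 + 2 = k := by omega
          rw [this, hcardQ]
          ring
        exact ⟨p ^ (k - 2), (Nat.eq_of_mul_eq_mul_right (pow_pos hp.pos 2) h2).symm⟩
      have hcyc : IsCyclic Q := isCyclic_of_card_dvd_prime hdvd
      have hEcomm := commutative_of_cyclic_center_quotient (QuotientGroup.mk' (Subgroup.center E))
        (by rw [QuotientGroup.ker_mk'])
      exact hab (hEcomm a b)
    have hkeq : k = 1 := by omega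
    subst hkeq
    have hQ2 : Nat.card Q = p ^ 2 := by
      have := hcardQ
      rw [pow_one] at this
      have h3 : p ^ 3 = p ^ 2 * p := by ring
      rw [h3] at this
      exact Nat.eq_of_mul_eq_mul_right hp.pos this
    have hQcomm := IsPGroup.commutative_of_card_eq_prime_sq hQ2
    have hone : QuotientGroup.mk' (Subgroup.center E) c = 1 := by
      rw [hc]
      simp only [_root_.map_mul, _root_.map_inv]
      set x := QuotientGroup.mk' (Subgroup.center E) a
      set y := QuotientGroup.mk' (Subgroup.center E) b
      have h2 : y * x = x * y := hQcomm y x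
      calc y⁻¹ * x⁻¹ * y * x = y⁻¹ * x⁻¹ * (y * x) := by group
        _ = y⁻¹ * x⁻¹ * (x * y) := by rw [h2]
        _ = 1 := by group
    simpa using (QuotientGroup.eq_one_iff c).mp hone
  have hac : Commute a c := Subgroup.mem_center_iff.mp hcenter a
  have hbc : Commute b c := Subgroup.mem_center_iff.mp hcenter b
  have ha : a ^ p = 1 := hexp a
  have hb : b ^ p = 1 := hexp b
  have hcp : c ^ p = 1 := hexp c
  have swap : ∀ {x y : E}, Commute x y → ∀ z : E, x * (y * z) = y * (x * z) := by
    intro x y h z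
    rw [← mul_assoc, h.eq, mul_assoc]
  have key1 : ∀ n : ℕ, b * a ^ n = a ^ n * (b * c ^ n) := by
    intro n
    induction n with
    | zero => simp
    | succ n ih =>
      calc b * a ^ (n + 1) = (b * a ^ n) * a := by rw [pow_succ, mul_assoc]
        _ = (a ^ n * (b * c ^ n)) * a := by rw [ih]
        _ = a ^ n * (b * (c ^ n * a)) := by simp only [mul_assoc]
        _ = a ^ n * (b * (a * c ^ n)) := by rw [(hac.symm.pow_left n).eq]
        _ = a ^ n * ((b * a) * c ^ n) := by simp only [mul_assoc]
        _ = a ^ n * ((a * b * c) * c ^ n) := by rw [hba]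
        _ = a ^ (n + 1) * (b * c ^ (n + 1)) := by
            rw [pow_succ a, pow_succ' c]
            simp only [mul_assoc]
  have key : ∀ m n : ℕ, b ^ m * a ^ n = a ^ n * (b ^ m * c ^ (m * n)) := by
    intro m n
    induction m with
    | zero => simp
    | succ m ih =>
      calc b ^ (m + 1) * a ^ n = b ^ m * (b * a ^ n) := by rw [pow_succ, mul_assoc]
        _ = b ^ m * (a ^ n * (b * c ^ n)) := by rw [key1 n]
        _ = (b ^ m * a ^ n) * (b * c ^ n) := by rw [mul_assoc]
        _ = (a ^ n * (b ^ m * c ^ (m * n))) * (b * c ^ n) := by rw [ih]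
        _ = a ^ n * (b ^ m * (c ^ (m * n) * (b * c ^ n))) := by simp only [mul_assoc]
        _ = a ^ n * (b ^ m * (b * (c ^ (m * n) * c ^ n))) := by
            rw [swap (hbc.pow_right (m * n)).symm]
        _ = a ^ n * (b ^ (m + 1) * c ^ ((m + 1) * n)) := by
            rw [pow_succ b, Nat.succ_mul, pow_add]
            simp only [mul_assoc]
  set ψ : ZMod p × ZMod p × ZMod p → E :=
    fun t => a ^ t.1.val * b ^ t.2.1.val * c ^ t.2.2.val with hψ
  have hpsi_mul : ∀ t t' : ZMod p × ZMod p × ZMod p,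
      ψ t * ψ t' = ψ (t.1 + t'.1, t.2.1 + t'.2.1, t.2.2 + t'.2.2 + t.2.1 * t'.1) := by
    rintro ⟨i, j, k⟩ ⟨i', j', k'⟩
    show a ^ i.val * b ^ j.val * c ^ k.val * (a ^ i'.val * b ^ j'.val * c ^ k'.val) =
      a ^ (i + i').val * b ^ (j + j').val * c ^ (k + k' + j * i').val
    rw [myPow_val_add ha, myPow_val_add hb, myPow_val_add hcp, myPow_val_add hcp,
      myPow_val_mul hcp]
    simp only [mul_assoc]
    rw [swap ((hac.symm).pow_pow k.val i'.val)]
    rw [swap ((hbc.symm).pow_pow k.val j'.val)]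
    rw [← mul_assoc (b ^ j.val), key j.val i'.val]
    simp only [mul_assoc]
    rw [swap ((hbc.symm).pow_pow (j.val * i'.val) j'.val)]
    rw [← pow_add, ← pow_add, ← pow_add, ← pow_add]
    have : j.val * i'.val + (k.val + k'.val) = k.val + (k'.val + j.val * i'.val) := by ring
    rw [this]
  have hpsi_one : ψ (0, 0, 0) = 1 := by
    simp [hψ, ZMod.val_zero]
  have hS : ∃ S : Subgroup E, (S : Set E) = Set.range ψ := by
    refine ⟨{ carrier := Set.range ψ
              mul_mem' := ?_
              one_mem' := ⟨(0, 0, 0), hpsi_one⟩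
              inv_mem' := ?_ }, rfl⟩
    · rintro _ _ ⟨t, rfl⟩ ⟨t', rfl⟩
      exact ⟨_, (hpsi_mul t t').symm⟩
    · rintro _ ⟨⟨i, j, k⟩, rfl⟩
      refine ⟨(-i, -j, j * i - k), ?_⟩
      have e1 : ((-i + i : ZMod p), (-j + j : ZMod p), ((j * i - k) + k + -j * i : ZMod p)) =
          ((0 : ZMod p), (0 : ZMod p), (0 : ZMod p)) := by
        simp only [Prod.mk.injEq]
        refine ⟨by ring, by ring, by ring⟩
      exact eq_inv_of_mul_eq_one_left (by rw [hpsi_mul, e1, hpsi_one])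
  obtain ⟨S, hSr⟩ := hS
  have ha_mem : a ∈ S := by
    have h : a ∈ Set.range ψ := ⟨(1, 0, 0), by simp [hψ, ZMod.val_one, ZMod.val_zero]⟩
    rw [← hSr] at h
    exact h
  have hb_mem : b ∈ S := by
    have h : b ∈ Set.range ψ := ⟨(0, 1, 0), by simp [hψ, ZMod.val_one, ZMod.val_zero]⟩
    rw [← hSr] at h
    exact h
  have hStop : S = ⊤ := by
    obtain ⟨l, hl3, hlc⟩ := (Nat.dvd_prime_pow hp).mp
      (hcard ▸ Subgroup.card_subgroup_dvd_card S)
    have hl : l = 3 := by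
      by_contra hne
      have hl2 : l ≤ 2 := by omega
      have hScomm : ∀ x y : S, x * y = y * x := by
        interval_cases l
        · have : Nat.card S = 1 := by rw [hlc, pow_zero]
          have : Subsingleton S := Nat.card_eq_one_iff_unique.mp this |>.1
          exact fun x y => Subsingleton.elim _ _
        · have : Nat.card S = p := by rw [hlc, pow_one]
          have : IsCyclic S := isCyclic_of_prime_card this
          exact fun x y => (IsCyclic.commGroup (α := S)).mul_comm x y
        · exact IsPGroup.commutative_of_card_eq_prime_sq hlc
      have := hScomm ⟨a, ha_mem⟩ ⟨b, hb_mem⟩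
      exact hab (Subtype.ext_iff.mp this)
    apply Subgroup.eq_top_of_card_eq
    rw [hlc, hl, hcard]
  have hsurj : Function.Surjective ψ := by
    intro x
    have hx : x ∈ (S : Set E) := by rw [hStop]; trivial
    rw [hSr] at hx
    exact hx
  have hcard' : Nat.card (ZMod p × ZMod p × ZMod p) = Nat.card E := by
    rw [Nat.card_prod, Nat.card_prod, Nat.card_zmod, hcard]
    ring
  exact ⟨ψ, (Nat.bijective_iff_surjective_and_card ψ).mpr ⟨hsurj, hcard'⟩, hpsi_mul⟩

end ExtraspecialAux

open ExtraspecialAux in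
/-- Let `p` be an odd prime and `F` a finite field with `q` elements where `p ∣ q - 1`.
Every non-abelian group `E` of order `p³` and exponent `p` embeds into `GL(p, F)`. -/
theorem extraspecial_embeds_in_GL (p : ℕ) (hp : p.Prime) (hodd : Odd p)
    (F : Type*) [Field F] [Fintype F] (hq : p ∣ Fintype.card F - 1)
    (E : Type*) [Group E] [Finite E] (hcard : Nat.card E = p ^ 3)
    (hnonab : ¬∀ a b : E, a * b = b * a) (hexp : ∀ x : E, x ^ p = 1) :
    ∃ f : E →* GL (Fin p) F, Function.Injective f := by
  have hfact : Fact p.Prime := ⟨hp⟩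
  have hnz : NeZero p := ⟨hp.pos.ne'⟩
  -- a primitive p-th root of unity
  obtain ⟨u, hu⟩ := exists_prime_orderOf_dvd_card' (G := Fˣ) p
    (by rw [Nat.card_units, Nat.card_eq_fintype_card]; exact hq)
  set ζ : F := (u : F) with hζdef
  have hζ : orderOf ζ = p := by rw [hζdef, orderOf_units, hu]
  have hζp : ζ ^ p = 1 := by rw [← hζ]; exact pow_orderOf_eq_one ζ
  -- normal form for E
  obtain ⟨ψ, hbij, hmul⟩ := exists_normal_form p hp E hcard hnonab hexp
  set e : (ZMod p × ZMod p × ZMod p) ≃ E := Equiv.ofBijective ψ hbij with he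
  have happ : ∀ t, e t = ψ t := fun t => rfl
  -- the homomorphism into matrices indexed by ZMod p
  have hcomb : ∀ x y : E, e.symm (x * y) =
      ((e.symm x).1 + (e.symm y).1, (e.symm x).2.1 + (e.symm y).2.1,
        (e.symm x).2.2 + (e.symm y).2.2 + (e.symm x).2.1 * (e.symm y).1) := by
    intro x y
    rw [Equiv.symm_apply_eq]
    conv_lhs => rw [← e.apply_symm_apply x, ← e.apply_symm_apply y]
    rw [happ, happ, happ]
    exact hmul _ _
  set f₀ : E →* (Matrix (ZMod p) (ZMod p) F)ˣ :=
    MonoidHom.mk' (fun x => myU ζ hζp (e.symm x)) (by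
      intro x y
      show myU ζ hζp (e.symm (x * y)) = myU ζ hζp (e.symm x) * myU ζ hζp (e.symm y)
      rw [hcomb x y]
      apply Units.ext
      show myM ζ _ _ _ = (myU ζ hζp (e.symm x)).val * (myU ζ hζp (e.symm y)).val
      rw [show (myU ζ hζp (e.symm x)).val = myM ζ (e.symm x).1 (e.symm x).2.1 (e.symm x).2.2
        from rfl, show (myU ζ hζp (e.symm y)).val = myM ζ (e.symm y).1 (e.symm y).2.1
        (e.symm y).2.2 from rfl, myM_mul hζp]) with hf₀
  have hf₀inj : Function.Injective f₀ := by
    intro x y h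
    have hval : myM ζ (e.symm x).1 (e.symm x).2.1 (e.symm x).2.2 =
        myM ζ (e.symm y).1 (e.symm y).2.1 (e.symm y).2.2 := congrArg Units.val h
    obtain ⟨h1, h2, h3⟩ := myM_inj hζ hval
    have : e.symm x = e.symm y := Prod.ext h1 (Prod.ext h2 h3)
    exact e.symm.injective this
  -- reindex to Fin p
  let eqv : ZMod p ≃ Fin p := Fintype.equivFinOfCardEq (ZMod.card p)
  let re : Matrix (ZMod p) (ZMod p) F ≃ₐ[F] Matrix (Fin p) (Fin p) F :=
    Matrix.reindexAlgEquiv F F eqv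
  let φ : (Matrix (ZMod p) (ZMod p) F)ˣ →* (Matrix (Fin p) (Fin p) F)ˣ :=
    Units.map (re : Matrix (ZMod p) (ZMod p) F →* Matrix (Fin p) (Fin p) F)
  refine ⟨φ.comp f₀, ?_⟩
  have hφinj : Function.Injective φ := Units.map_injective re.injective
  exact hφinj.comp hf₀inj
end

section
/- Let p be an odd prime and let F be a finite field with q elements where p does not divide q. If n < e_p(q) · p, then the Sylow p-subgroups of GL(n, F) are abelian. -/
/-- `e_p(q)`: the multiplicative order of `q` modulo `p`, i.e. the least `i ≥ 1` with
`p ∣ q^i - 1`. -/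
noncomputable def multOrderMod (p q : ℕ) : ℕ :=
  orderOf (q : ZMod p)

/-!
Write `q = |F|`, `e = e_p(q)` and `a = v_p(q^e - 1)`. Up to a power of `q`, `|GL(n, F)|` is
`∏_{j ≤ n} (q^j - 1)`, and `p ∣ q^j - 1` exactly when `e ∣ j`; for `j = e m` with `m < p`,
lifting the exponent gives `v_p(q^j - 1) = a + v_p(m) = a`. So `v_p |GL(n, F)| = ⌊n/e⌋ a`.
If `K/F` has degree `e`, the commutative `F`-algebra `K^⌊n/e⌋ × F^(n mod e)` has dimension `n`,
so its unit group, of order divisible by `(q^e - 1)^⌊n/e⌋`, acts faithfully on it: an abelian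
subgroup of `GL(n, F)` containing a full Sylow `p`-subgroup. All Sylow `p`-subgroups are
conjugate to that one.
-/

theorem Nat.dvd_pow_sub_one_iff_orderOf_dvd {p q : ℕ} (hq : q ≠ 0) (i : ℕ) :
    p ∣ q ^ i - 1 ↔ orderOf (q : ZMod p) ∣ i := by
  rw [orderOf_dvd_iff_pow_eq_one,
    ← Nat.modEq_iff_dvd' (Nat.one_le_pow _ _ (Nat.pos_of_ne_zero hq)),
    ← ZMod.natCast_eq_natCast_iff, Nat.cast_pow, Nat.cast_one, eq_comm]

theorem Nat.factorization_pow_sub_one_of_lt {p x m : ℕ} (hp : p.Prime) (hodd : Odd p)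
    (hx : p ∣ x - 1) (hm₀ : m ≠ 0) (hmp : m < p) :
    (x ^ m - 1).factorization p = (x - 1).factorization p := by
  have := Fact.mk hp
  rcases Nat.lt_or_ge 1 x with hx₁ | hx₁
  · have hpx : ¬p ∣ x := fun h ↦ hp.one_lt.ne'
      (Nat.dvd_one.1 (by simpa [Nat.sub_sub_self hx₁.le] using Nat.dvd_sub h hx))
    have hpm : padicValNat p m = 0 := padicValNat.eq_zero_of_not_dvd
      fun h ↦ (Nat.le_of_dvd (Nat.pos_of_ne_zero hm₀) h).not_gt hmp
    rw [Nat.factorization_def _ hp, Nat.factorization_def _ hp]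
    simpa [hpm] using padicValNat.pow_sub_pow (y := 1) hodd hx₁ (by simpa using hx) hpx hm₀
  · interval_cases x <;> simp [zero_pow hm₀]

theorem Nat.sum_factorization_pow_sub_one {p q n : ℕ} (hp : p.Prime) (hodd : Odd p)
    (hq : ¬p ∣ q) (hn : n < orderOf (q : ZMod p) * p) :
    ∑ j ∈ Finset.Ioc 0 n, (q ^ j - 1).factorization p =
      n / orderOf (q : ZMod p) * (q ^ orderOf (q : ZMod p) - 1).factorization p := by
  set e := orderOf (q : ZMod p)
  have hq₀ : q ≠ 0 := by rintro rfl; exact hq (dvd_zero p)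
  have hterm : ∀ j ∈ Finset.Ioc 0 n, (q ^ j - 1).factorization p =
      if e ∣ j then (q ^ e - 1).factorization p else 0 := by
    intro j hj
    rw [Finset.mem_Ioc] at hj
    split_ifs with hej
    · obtain ⟨m, rfl⟩ := hej
      have hm₀ : m ≠ 0 := by rintro rfl; omega
      have hmp : m < p := Nat.lt_of_mul_lt_mul_left (hj.2.trans_lt hn)
      rw [pow_mul]
      exact Nat.factorization_pow_sub_one_of_lt hp hodd
        ((Nat.dvd_pow_sub_one_iff_orderOf_dvd hq₀ e).2 dvd_rfl) hm₀ hmp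
    · exact Nat.factorization_eq_zero_of_not_dvd
        fun h ↦ hej ((Nat.dvd_pow_sub_one_iff_orderOf_dvd hq₀ j).1 h)
  rw [Finset.sum_congr rfl hterm, ← Finset.sum_filter, Finset.sum_const,
    Nat.Ioc_filter_dvd_card_eq_div, smul_eq_mul]

theorem Matrix.factorization_card_GL_field {p : ℕ} (F : Type*) [Field F] [Fintype F]
    (hq : ¬p ∣ Fintype.card F) (n : ℕ) :
    (Nat.card (GL (Fin n) F)).factorization p =
      ∑ j ∈ Finset.Ioc 0 n, (Fintype.card F ^ j - 1).factorization p := by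
  set q := Fintype.card F
  have hq₁ : 1 < q := Fintype.one_lt_card
  have hterm : ∀ i < n, q ^ n - q ^ i = q ^ i * (q ^ (n - i) - 1) := fun i hi ↦ by
    rw [Nat.mul_sub, mul_one, ← pow_add, Nat.add_sub_cancel' hi.le]
  have hne : ∀ i < n, q ^ (n - i) - 1 ≠ 0 := fun i hi ↦
    Nat.sub_ne_zero_of_lt (Nat.one_lt_pow (by omega) hq₁)
  rw [Matrix.card_GL_field, Nat.factorization_prod fun i _ ↦ ?_, Finset.sum_apply',
    Fin.sum_univ_eq_sum_range (fun i ↦ (q ^ n - q ^ i).factorization p)]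
  · refine Finset.sum_nbij' (n - ·) (n - ·) ?_ ?_ ?_ ?_ ?_ <;> intro i hi <;>
      simp only [Finset.mem_range, Finset.mem_Ioc] at hi ⊢
    any_goals omega
    rw [hterm i hi, Nat.factorization_mul (pow_ne_zero _ (by omega)) (hne i hi),
      Finsupp.add_apply, Nat.factorization_pow, Finsupp.smul_apply,
      Nat.factorization_eq_zero_of_not_dvd hq, smul_zero, zero_add]
  · rw [hterm i i.2]
    exact mul_ne_zero (pow_ne_zero _ (by omega)) (hne i i.2)

theorem Nat.card_units_prod (M N : Type*) [Monoid M] [Monoid N] :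
    Nat.card (M × N)ˣ = Nat.card Mˣ * Nat.card Nˣ := by
  rw [Nat.card_congr MulEquiv.prodUnits.toEquiv, Nat.card_prod]

theorem Nat.card_units_fun (ι M : Type*) [Finite ι] [Monoid M] :
    Nat.card (ι → M)ˣ = Nat.card Mˣ ^ Nat.card ι := by
  rw [Nat.card_congr MulEquiv.piUnits.toEquiv, Nat.card_fun]

theorem exists_isMulCommutative_subgroup_GL (F : Type*) [Field F] [Fintype F] (n : ℕ) {e : ℕ}
    (he : e ≠ 0) : ∃ H : Subgroup (GL (Fin n) F),
      IsMulCommutative H ∧ (Fintype.card F ^ e - 1) ^ (n / e) ∣ Nat.card H := by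
  obtain ⟨c, hc⟩ := CharP.exists F
  have := Fact.mk (CharP.char_is_prime F c)
  have := NeZero.mk he
  let K := FiniteField.Extension F c e
  let A := (Fin (n / e) → K) × (Fin (n % e) → F)
  have hA : Module.finrank F A = n := by
    rw [Module.finrank_prod, Module.finrank_pi_fintype, Module.finrank_pi,
      FiniteField.finrank_extension]
    simpa only [Finset.card_univ, Fintype.card_fin, smul_eq_mul, Finset.sum_const,
      Module.finrank_self, mul_one] using Nat.div_add_mod' n e
  let f : Aˣ →* GL (Fin n) F :=
    Units.map (Algebra.leftMulMatrix (Module.finBasisOfFinrankEq F A hA)).toMonoidHom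
  have hf : Function.Injective f := Units.map_injective (Algebra.leftMulMatrix_injective _)
  refine ⟨f.range, inferInstance, Dvd.intro ((Fintype.card F - 1) ^ (n % e)) ?_⟩
  rw [← Nat.card_congr (MonoidHom.ofInjective hf).toEquiv, Nat.card_units_prod,
    Nat.card_units_fun, Nat.card_units_fun, Nat.card_units, Nat.card_units,
    FiniteField.natCard_extension]
  simp [Nat.card_eq_fintype_card]

theorem Sylow.isMulCommutative_of_factorization_card_le {G : Type*} [Group G] [Finite G]
    {p : ℕ} [Fact p.Prime] {H : Subgroup G} [IsMulCommutative H]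
    (hH : (Nat.card G).factorization p ≤ (Nat.card H).factorization p) (P : Sylow p G) :
    IsMulCommutative P := by
  obtain ⟨Q⟩ : Nonempty (Sylow p H) := inferInstance
  have hcard : Nat.card (Q.map H.subtype) = p ^ (Nat.card G).factorization p := by
    have hle : (Nat.card H).factorization p ≤ (Nat.card G).factorization p :=
      (Nat.factorization_le_iff_dvd Nat.card_pos.ne' Nat.card_pos.ne').2
        H.card_subgroup_dvd_card p
    rw [Subgroup.card_map_of_injective H.subtype_injective, Q.card_eq_multiplicity,
      hle.antisymm hH]
  obtain ⟨g, rfl⟩ := MulAction.exists_smul_eq G (Sylow.ofCard _ hcard) P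
  change IsMulCommutative ((Q.map H.subtype).map (MulAut.conj g).toMonoidHom)
  infer_instance

/-- Let `p` be an odd prime and `F` a finite field with `q` elements, `p ∤ q`.
If `n < e_p(q) · p`, then the Sylow `p`-subgroups of `GL(n, F)` are abelian. -/
theorem sylow_abelian_of_lt_multOrder_mul (p : ℕ) (hp : p.Prime) (hodd : Odd p)
    (F : Type*) [Field F] [Fintype F] (hq : ¬p ∣ Fintype.card F)
    (n : ℕ) (hn : n < multOrderMod p (Fintype.card F) * p) :
    ∀ P : Sylow p (GL (Fin n) F), IsMulCommutative (P : Subgroup (GL (Fin n) F)) := by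
  have := Fact.mk hp
  set e := multOrderMod p (Fintype.card F)
  have he : e ≠ 0 := by rintro h; simp [h] at hn
  obtain ⟨H, hH, hcard⟩ := exists_isMulCommutative_subgroup_GL F n he
  have hpow : Fintype.card F ^ e - 1 ≠ 0 :=
    Nat.sub_ne_zero_of_lt (Nat.one_lt_pow he Fintype.one_lt_card)
  refine Sylow.isMulCommutative_of_factorization_card_le (H := H) ?_
  calc (Nat.card (GL (Fin n) F)).factorization p
      = n / e * (Fintype.card F ^ e - 1).factorization p := by
        rw [Matrix.factorization_card_GL_field F hq]
        exact Nat.sum_factorization_pow_sub_one hp hodd hq hn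
    _ = ((Fintype.card F ^ e - 1) ^ (n / e)).factorization p := by
        rw [Nat.factorization_pow, Finsupp.smul_apply, smul_eq_mul]
    _ ≤ (Nat.card H).factorization p :=
        (Nat.factorization_le_iff_dvd (pow_ne_zero _ hpow) Nat.card_pos.ne').2 hcard p
end

section
/- Let p be a prime, G a finite group, Q a p-subgroup of G, and P a Sylow p-subgroup of G that contains a Sylow p-subgroup of N_G(Q). Then every p-subgroup R of G containing Q·C_P(Q) is p-centric. -/
/-!
Let `S` be a Sylow `p`-subgroup of `N_G(Q)` inside `P`. Since `C_G(Q)` is normal in `N_G(Q)`,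
`D = S ∩ C_G(Q)` has index prime to `p` in `C_G(Q)`, and `D ≤ C_P(Q) ≤ R`. A `p`-element `x`
centralizing `R` lies in `C_G(Q)` and centralizes `D`, so `⟨x⟩D` is a `p`-subgroup of `C_G(Q)`
containing `D`; by the index condition it equals `D`, whence `x ∈ D ≤ R`.
-/

/-- A `p`-subgroup `Q` of `G` is `p`-centric if every `p`-element of `C_G(Q)` lies in
`Q`. -/
def IsPCentric (p : ℕ) {G : Type*} [Group G] (Q : Subgroup G) : Prop :=
  IsPGroup p Q ∧
    ∀ x ∈ Subgroup.centralizer (Q : Set G), (∃ k : ℕ, x ^ p ^ k = 1) → x ∈ Q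

open Subgroup

namespace Subgroup

variable {G : Type*} [Group G]

-- Both sides, multiplied by `[H : H ⊓ K]`, give `[H ⊔ K : H ⊓ K]`.
theorem relIndex_sup_of_normal_right (H K : Subgroup G) [K.Normal] [K.IsFiniteRelIndex H] :
    H.relIndex (H ⊔ K) = H.relIndex K := by
  have hK := relIndex_mul_relIndex (H ⊓ K) K (H ⊔ K) inf_le_right le_sup_right
  have hH := relIndex_mul_relIndex (H ⊓ K) H (H ⊔ K) inf_le_left le_sup_left
  rw [inf_relIndex_right, relIndex_sup_right] at hK
  rw [inf_relIndex_left] at hH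
  exact Nat.eq_of_mul_eq_mul_left (Nat.pos_of_ne_zero relIndex_ne_zero)
    (hH.trans (hK.symm.trans (mul_comm _ _)))

theorem relIndex_dvd_index_of_normal_right {H K : Subgroup G} [K.Normal] [K.IsFiniteRelIndex H] :
    H.relIndex K ∣ H.index :=
  relIndex_sup_of_normal_right H K ▸ relIndex_dvd_index_of_le le_sup_left

end Subgroup

namespace IsPGroup

variable {p : ℕ} {G : Type*} [Group G]

theorem zpowers_of_pow_eq_one {g : G} {k : ℕ} (hg : g ^ p ^ k = 1) :
    IsPGroup p (zpowers g) :=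
  of_card_dvd_pow (n := k) (by rw [Nat.card_zpowers]; exact orderOf_dvd_of_pow_eq_one hg)

theorem le_of_not_dvd_relIndex [Fact p.Prime] {H T K : Subgroup G} (hT : IsPGroup p T)
    (hHT : H ≤ T) (hTK : T ≤ K) (hH : ¬ p ∣ H.relIndex K) : T ≤ H := by
  have hmul := relIndex_mul_relIndex H T K hHT hTK
  have : (H.subgroupOf T).FiniteIndex :=
    ⟨fun h => hH (by rw [← hmul, relIndex, h, zero_mul]; exact dvd_zero p)⟩
  obtain ⟨n, hn⟩ := hT.index (H.subgroupOf T)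
  rw [← relIndex_eq_one, relIndex, hn]
  cases n with
  | zero => rfl
  | succ n =>
    rw [relIndex, hn] at hmul
    exact absurd (hmul ▸ (dvd_pow_self p n.succ_ne_zero).mul_right _) hH

end IsPGroup

theorem Sylow.not_dvd_relIndex_of_normal {p : ℕ} [Fact p.Prime] {G : Type*} [Group G] [Finite G]
    (S : Sylow p G) (K : Subgroup G) [K.Normal] : ¬ p ∣ (S : Subgroup G).relIndex K := by
  have : K.IsFiniteRelIndex S := isFiniteRelIndex_iff_finiteIndex.mpr inferInstance
  exact fun h => S.not_dvd_index (h.trans relIndex_dvd_index_of_normal_right)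

theorem pCentric_of_le_general (p : ℕ) (hp : p.Prime)
    (G : Type*) [Group G] [Finite G] (Q : Subgroup G)
    (P : Sylow p G)
    (hP : ∃ S : Sylow p (Subgroup.normalizer (Q : Set G)),
      Subgroup.map (Subgroup.normalizer (Q : Set G)).subtype (S : Subgroup (Subgroup.normalizer (Q : Set G))) ≤ (P : Subgroup G))
    (R : Subgroup G) (hR : IsPGroup p R)
    (hQR : Q ⊔ (Subgroup.centralizer (Q : Set G) ⊓ (P : Subgroup G)) ≤ R) :
    IsPCentric p R := by
  have : Fact p.Prime := ⟨hp⟩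
  set N := normalizer (Q : Set G)
  set C := centralizer (Q : Set G)
  obtain ⟨S, hSP⟩ := hP
  set D := S.map N.subtype ⊓ C
  have hDR : D ≤ R :=
    (le_inf inf_le_right (inf_le_left.trans hSP)).trans (le_sup_right.trans hQR)
  have hDC : ¬ p ∣ D.relIndex C := by
    have hCN : (C.subgroupOf N).map N.subtype = C :=
      (subgroupOf_map_subtype C N).trans (inf_eq_left.mpr (centralizer_le_normalizer _))
    rw [inf_relIndex_right, ← hCN, relIndex_map_map_of_injective _ _ N.subtype_injective]
    exact S.not_dvd_relIndex_of_normal (C.subgroupOf N)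
  refine ⟨hR, fun x hx ⟨k, hxk⟩ => ?_⟩
  have hxC : x ∈ C := centralizer_le (SetLike.coe_subset_coe.mpr (le_sup_left.trans hQR)) hx
  have hxN : zpowers x ≤ normalizer (D : Set G) :=
    zpowers_le.mpr (centralizer_le_normalizer _ (centralizer_le hDR hx))
  have hT : IsPGroup p (zpowers x ⊔ D : Subgroup G) :=
    (IsPGroup.zpowers_of_pow_eq_one hxk).to_sup_of_normal_right' (hR.to_le hDR) hxN
  have hTD : zpowers x ⊔ D ≤ D :=
    hT.le_of_not_dvd_relIndex le_sup_right (sup_le (zpowers_le.mpr hxC) inf_le_right) hDC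
  exact hDR (hTD (mem_sup_left (mem_zpowers x)))

/-- Let `Q` be a `p`-subgroup of a finite group `G` and `P` a Sylow `p`-subgroup of `G`
containing a Sylow `p`-subgroup of `N_G(Q)`. Then every `p`-subgroup of `G` containing
`Q·C_P(Q)` is `p`-centric. -/
theorem pCentric_of_le (p : ℕ) (hp : p.Prime)
    (G : Type*) [Group G] [Finite G] (Q : Subgroup G) (hQ : IsPGroup p Q)
    (P : Sylow p G)
    (hP : ∃ S : Sylow p (Subgroup.normalizer (Q : Set G)),
      Subgroup.map (Subgroup.normalizer (Q : Set G)).subtype (S : Subgroup (Subgroup.normalizer (Q : Set G))) ≤ (P : Subgroup G))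
    (R : Subgroup G) (hR : IsPGroup p R)
    (hQR : Q ⊔ (Subgroup.centralizer (Q : Set G) ⊓ (P : Subgroup G)) ≤ R) :
    IsPCentric p R :=
  pCentric_of_le_general p hp G Q P hP R hR hQR
end
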